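/- Let p ∈ ℤ, let q ≥ 1 be an integer, let κ ≥ 2 be even, K = κq, σ ∈ {+1, −1}, and let τ = 2πp/q or τ = 2πp/q². Let U⁰ ∈ ℂ^{B^K} satisfy (F_K U⁰)_j = 0 for every j ∈ B^K not divisible by q, and define the splitting iterates U^{n+1} = e^{iτΔ^K}((e^{−iστ|U^n_k|²}U^n_k)_k) for n ≥ 0. Then for every n ≥ 0 and every k ∈ B^K, U^n_k = e^{−iσnτ|U⁰_k|²}U⁰_k. -/

import Mathlib

/-- The index set `B^K = {−K/2, …, K/2−1}` (for `K` even). -/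
noncomputable def BK (K : ℕ) : Finset ℤ := Finset.Icc (-((K : ℤ) / 2)) ((K : ℤ) / 2 - 1)

/-- The discrete Fourier transform `(F_K U)_j = (1/K) Σ_{k∈B^K} e^{−2πijk/K} U_k`. -/
noncomputable def dft (K : ℕ) (U : ℤ → ℂ) (j : ℤ) : ℂ :=
  (1 / (K : ℂ)) * ∑ k ∈ BK K,
    Complex.exp (-(2 * (Real.pi : ℂ) * Complex.I * (j : ℂ) * (k : ℂ)) / (K : ℂ)) * U k

/-- The inverse discrete Fourier transform `(F_K⁻¹ W)_k = Σ_{j∈B^K} e^{2πijk/K} W_j`. -/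
noncomputable def idft (K : ℕ) (W : ℤ → ℂ) (k : ℤ) : ℂ :=
  ∑ j ∈ BK K,
    Complex.exp ((2 * (Real.pi : ℂ) * Complex.I * (j : ℂ) * (k : ℂ)) / (K : ℂ)) * W j

/-- The discrete `ℓ²` norm: `‖U‖_{ℓ²}² = (2π/K) Σ_{k∈B^K} |U_k|²`. -/
noncomputable def l2normK (K : ℕ) (U : ℤ → ℂ) : ℝ :=
  Real.sqrt ((2 * Real.pi / K) * ∑ k ∈ BK K, ‖U k‖ ^ 2)

/-- The discrete `h¹` norm: `‖U‖_{h¹}² = (2π/K) Σ_{k∈B^K} |(U_{k+1}−U_k)/δx|²`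
with `δx = 2π/K`. -/
noncomputable def h1normK (K : ℕ) (U : ℤ → ℂ) : ℝ :=
  Real.sqrt ((2 * Real.pi / K) *
    ∑ k ∈ BK K, ‖(U (k + 1) - U k) / ((2 * Real.pi / K : ℝ) : ℂ)‖ ^ 2)

/-- The discrete kinetic energy `T^K(W) = (1/K) Σ_{j∈B^K} j²|W_j|²`. -/
noncomputable def tK (K : ℕ) (W : ℤ → ℂ) : ℝ :=
  (1 / (K : ℝ)) * ∑ j ∈ BK K, (j : ℝ) ^ 2 * ‖W j‖ ^ 2

/-- The discrete free Schrödinger flow `e^{itΔ^K}U = F_K⁻¹(j ↦ e^{−itj²}(F_K U)_j)`. -/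
noncomputable def freeFlowK (K : ℕ) (t : ℝ) (U : ℤ → ℂ) : ℤ → ℂ :=
  idft K (fun j => Complex.exp (-(Complex.I * (t : ℂ)) * (j : ℂ) ^ 2) * dft K U j)


/-!
If `F_K U⁰` is supported on `qℤ`, then `U⁰` agrees on `B^K` with a `κ`-periodic vector, and the
pointwise phase rotation `U_k ↦ e^{-it|U_k|²} U_k` preserves `κ`-periodicity. Conversely, the
Fourier coefficients of a `κ`-periodic vector are supported on `qℤ`, where the resonance of `τ`
makes the free propagator `e^{-iτj²}` equal to `1`. So every free step of the splitting scheme is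
the identity, and since the phase rotations conserve `|U_k|` they compose to `e^{-iσnτ|U⁰_k|²}`.
-/

open Complex Finset Function
open ZMod (stdAddChar)
open scoped Real

section BK

variable {K : ℕ}

lemma card_BK (hK : Even K) : #(BK K) = K := by
  obtain ⟨m, rfl⟩ := hK
  rw [BK, Int.card_Icc]
  omega

lemma injOn_intCast_BK : Set.InjOn (fun k : ℤ => (k : ZMod K)) (BK K) := by
  intro a ha b hb hab
  simp only [BK, coe_Icc, Set.mem_Icc] at ha hb
  have hdvd : (K : ℤ) ∣ b - a := (ZMod.intCast_eq_intCast_iff_dvd_sub a b K).mp hab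
  have hlt : |b - a| < K := by rw [abs_lt]; omega
  linarith [Int.eq_zero_of_abs_lt_dvd hdvd hlt]

variable [NeZero K]

lemma sum_BK_intCast {M : Type*} [AddCommMonoid M] (hK : Even K) (g : ZMod K → M) :
    ∑ k ∈ BK K, g k = ∑ x, g x := by
  rw [← sum_image injOn_intCast_BK]
  congr
  apply eq_univ_of_card
  rw [card_image_of_injOn injOn_intCast_BK, card_BK hK, ZMod.card]

lemma sum_BK_comp_add {M : Type*} [AddCommMonoid M] (hK : Even K) {f : ℤ → M}
    (hf : Periodic f K) (c : ℤ) : ∑ k ∈ BK K, f (k + c) = ∑ k ∈ BK K, f k := by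
  obtain ⟨g, hfg⟩ : ∃ g : ZMod K → M, ∀ k : ℤ, f k = g k := by
    refine ⟨fun x => f x.valMinAbs, fun k => ?_⟩
    obtain ⟨n, hn⟩ := (ZMod.intCast_eq_intCast_iff_dvd_sub k (k : ZMod K).valMinAbs K).mp
      (ZMod.coe_valMinAbs _).symm
    have h := hf.sub_int_mul_eq (x := (k : ZMod K).valMinAbs) n
    rw [Int.cast_id, show (k : ZMod K).valMinAbs - n * K = k by linarith] at h
    exact h
  simp only [hfg, Int.cast_add]
  rw [sum_BK_intCast hK (fun x => g (x + c)), sum_BK_intCast hK g]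
  exact Equiv.sum_comp (Equiv.addRight _) g

lemma sum_BK_stdAddChar_mul (hK : Even K) (b : ZMod K) :
    ∑ j ∈ BK K, stdAddChar ((j : ZMod K) * b) = if b = 0 then (K : ℂ) else 0 := by
  rw [sum_BK_intCast hK (fun x => stdAddChar (x * b)),
    AddChar.sum_mulShift b (ZMod.isPrimitive_stdAddChar K), ZMod.card, Nat.cast_ite, Nat.cast_zero]

end BK

section Fourier

variable {K : ℕ}

lemma dft_congr {U V : ℤ → ℂ} (h : ∀ k ∈ BK K, U k = V k) : dft K U = dft K V := by
  funext j
  simp only [dft]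
  congr 1
  exact sum_congr rfl fun k hk => by rw [h k hk]

lemma freeFlowK_congr {t : ℝ} {U V : ℤ → ℂ} (h : ∀ k ∈ BK K, U k = V k) :
    freeFlowK K t U = freeFlowK K t V := by
  rw [freeFlowK, freeFlowK, dft_congr h]

lemma freeFlowK_eq_idft_dft {t : ℝ} {V : ℤ → ℂ}
    (h : ∀ j ∈ BK K, exp (-(I * t) * (j : ℂ) ^ 2) = 1 ∨ dft K V j = 0) :
    freeFlowK K t V = idft K (dft K V) := by
  funext k
  simp only [freeFlowK, idft]
  refine sum_congr rfl fun j hj => ?_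
  rcases h j hj with h | h <;> simp only [h, one_mul, mul_zero]

variable [NeZero K]

lemma exp_eq_stdAddChar (j k : ℤ) :
    exp (2 * π * I * j * k / K) = stdAddChar ((j : ZMod K) * (k : ZMod K)) := by
  rw [← Int.cast_mul, ZMod.stdAddChar_coe]
  push_cast
  ring_nf

lemma exp_neg_eq_stdAddChar (j k : ℤ) :
    exp (-(2 * π * I * j * k) / K) = stdAddChar (-((j : ZMod K) * (k : ZMod K))) := by
  rw [← Int.cast_mul, ← Int.cast_neg, ZMod.stdAddChar_coe]
  push_cast
  ring_nf

lemma idft_dft_of_mem (hK : Even K) (V : ℤ → ℂ) {k : ℤ} (hk : k ∈ BK K) :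
    idft K (dft K V) k = V k := by
  have hchar : ∀ l ∈ BK K, ∑ j ∈ BK K, stdAddChar ((j : ZMod K) * ((k : ZMod K) - (l : ZMod K))) =
      if l = k then (K : ℂ) else 0 := by
    intro l hl
    rw [sum_BK_stdAddChar_mul hK]
    exact if_congr (sub_eq_zero.trans ⟨fun h => injOn_intCast_BK hl hk h.symm, fun h => h ▸ rfl⟩)
      rfl rfl
  calc idft K (dft K V) k
      = ∑ l ∈ BK K, (1 / K) *
          ((∑ j ∈ BK K, stdAddChar ((j : ZMod K) * ((k : ZMod K) - (l : ZMod K)))) * V l) := by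
        simp only [idft, dft, exp_eq_stdAddChar, exp_neg_eq_stdAddChar, mul_sum, sum_mul]
        rw [sum_comm]
        refine sum_congr rfl fun l _ => sum_congr rfl fun j _ => ?_
        rw [mul_sub, sub_eq_add_neg, AddChar.map_add_eq_mul]
        ring
    _ = ∑ l ∈ BK K, (1 / K) * ((if l = k then (K : ℂ) else 0) * V l) :=
        sum_congr rfl fun l hl => by rw [hchar l hl]
    _ = V k := by simp [ite_mul, hk, NeZero.ne K]

end Fourier

section Resonance

variable {κ q : ℕ} [NeZero (κ * q)]

lemma intCast_mul_natCast_eq_zero_iff (j : ℤ) :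
    (j : ZMod (κ * q)) * (κ : ZMod (κ * q)) = 0 ↔ (q : ℤ) ∣ j := by
  have hκ : (κ : ℤ) ≠ 0 := by exact_mod_cast left_ne_zero_of_mul (NeZero.ne (κ * q))
  rw [← Int.cast_natCast κ, ← Int.cast_mul, ZMod.intCast_zmod_eq_zero_iff_dvd, Nat.cast_mul,
    mul_comm j, mul_dvd_mul_iff_left hκ]

lemma idft_periodic_of_dvd {W : ℤ → ℂ} (hW : ∀ j ∈ BK (κ * q), ¬ (q : ℤ) ∣ j → W j = 0) :
    Periodic (idft (κ * q) W) κ := by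
  intro k
  refine sum_congr rfl fun j hj => ?_
  by_cases hqj : (q : ℤ) ∣ j
  · rw [exp_eq_stdAddChar, exp_eq_stdAddChar, Int.cast_add, mul_add, AddChar.map_add_eq_mul,
      Int.cast_natCast, (intCast_mul_natCast_eq_zero_iff j).mpr hqj, AddChar.map_zero_eq_one,
      mul_one]
  · rw [hW j hj hqj, mul_zero, mul_zero]

lemma dft_eq_zero_of_periodic (hK : Even (κ * q)) {V : ℤ → ℂ} (hV : Periodic V κ) {j : ℤ}
    (hj : ¬ (q : ℤ) ∣ j) : dft (κ * q) V j = 0 := by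
  let f : ℤ → ℂ := fun k => stdAddChar (-((j : ZMod (κ * q)) * (k : ZMod (κ * q)))) * V k
  have hf : Periodic f (κ * q : ℕ) := by
    intro k
    have hVK : V (k + (κ * q : ℕ)) = V k := by
      simpa [mul_comm] using (hV.nat_mul q) k
    simp only [f]
    rw [hVK, Int.cast_add, Int.cast_natCast, ZMod.natCast_self, add_zero]
  -- shifting the summation variable by `κ` multiplies the sum by a nontrivial root of unity
  have hshift : stdAddChar (-((j : ZMod (κ * q)) * (κ : ZMod (κ * q)))) * ∑ k ∈ BK (κ * q), f k =
      ∑ k ∈ BK (κ * q), f k := by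
    conv_rhs => rw [← sum_BK_comp_add hK hf κ]
    rw [mul_sum]
    refine sum_congr rfl fun k _ => ?_
    simp only [f]
    rw [hV k, Int.cast_add, Int.cast_natCast, mul_add, neg_add, AddChar.map_add_eq_mul]
    ring
  have hne : stdAddChar (-((j : ZMod (κ * q)) * (κ : ZMod (κ * q)))) ≠ 1 := by
    rw [← AddChar.map_zero_eq_one (stdAddChar (N := κ * q)),
      ZMod.injective_stdAddChar.ne_iff, neg_ne_zero, Ne, intCast_mul_natCast_eq_zero_iff]
    exact hj
  rw [dft, sum_congr rfl fun k _ => by rw [exp_neg_eq_stdAddChar],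
    (mul_left_eq_self₀.mp hshift).resolve_left hne, mul_zero]

end Resonance

lemma exp_neg_I_mul_sq_eq_one_of_dvd {p : ℤ} {q : ℕ} (hq : q ≠ 0) {τ : ℝ}
    (hτ : τ = 2 * π * p / q ∨ τ = 2 * π * p / q ^ 2) {j : ℤ} (hj : (q : ℤ) ∣ j) :
    exp (-(I * τ) * (j : ℂ) ^ 2) = 1 := by
  obtain ⟨m, rfl⟩ := hj
  rw [exp_eq_one_iff]
  rcases hτ with rfl | rfl
  · exact ⟨-(p * q * m ^ 2), by push_cast; field_simp⟩
  · exact ⟨-(p * m ^ 2), by push_cast; field_simp⟩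

lemma freeFlowK_apply_of_periodic {p : ℤ} {κ q : ℕ} [NeZero (κ * q)] (hK : Even (κ * q))
    {τ : ℝ} (hτ : τ = 2 * π * p / q ∨ τ = 2 * π * p / q ^ 2) {V : ℤ → ℂ} (hV : Periodic V κ)
    {k : ℤ} (hk : k ∈ BK (κ * q)) : freeFlowK (κ * q) τ V k = V k := by
  rw [freeFlowK_eq_idft_dft, idft_dft_of_mem hK V hk]
  intro j _
  by_cases hj : (q : ℤ) ∣ j
  · exact Or.inl (exp_neg_I_mul_sq_eq_one_of_dvd (right_ne_zero_of_mul (NeZero.ne (κ * q))) hτ hj)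
  · exact Or.inr (dft_eq_zero_of_periodic hK hV hj)

noncomputable def phaseFlow (t : ℝ) (U : ℤ → ℂ) (k : ℤ) : ℂ :=
  exp (-(I * t) * (‖U k‖ : ℂ) ^ 2) * U k

lemma norm_phaseFlow (t : ℝ) (U : ℤ → ℂ) (k : ℤ) : ‖phaseFlow t U k‖ = ‖U k‖ := by
  rw [phaseFlow, norm_mul, norm_exp]
  simp [sq]

lemma phaseFlow_phaseFlow (s t : ℝ) (U : ℤ → ℂ) :
    phaseFlow s (phaseFlow t U) = phaseFlow (t + s) U := by
  funext k
  rw [phaseFlow, norm_phaseFlow, phaseFlow, phaseFlow, ← mul_assoc, ← exp_add]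
  push_cast
  ring_nf

lemma periodic_phaseFlow {U : ℤ → ℂ} {c : ℤ} (hU : Periodic U c) (t : ℝ) :
    Periodic (phaseFlow t U) c := fun k => by rw [phaseFlow, phaseFlow, hU k]

lemma splitting_eq_phaseFlow {p : ℤ} {κ q : ℕ} [NeZero (κ * q)] (hK : Even (κ * q)) {τ θ : ℝ}
    (hτ : τ = 2 * π * p / q ∨ τ = 2 * π * p / q ^ 2) {U : ℤ → ℂ} (hU : Periodic U κ)
    {Un : ℕ → ℤ → ℂ} (h0 : ∀ k ∈ BK (κ * q), Un 0 k = U k)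
    (hrec : ∀ n, Un (n + 1) = freeFlowK (κ * q) τ (phaseFlow θ (Un n))) :
    ∀ n : ℕ, ∀ k ∈ BK (κ * q), Un n k = phaseFlow (n * θ) U k := by
  intro n
  induction n with
  | zero => intro k hk; simp [phaseFlow, h0 k hk]
  | succ n ih =>
    intro k hk
    have hphase : ∀ l ∈ BK (κ * q), phaseFlow θ (Un n) l = phaseFlow ((n + 1 : ℕ) * θ) U l := by
      intro l hl
      rw [Nat.cast_succ, add_one_mul, ← phaseFlow_phaseFlow, phaseFlow, phaseFlow, ih l hl]
    rw [hrec n, freeFlowK_congr hphase]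
    exact freeFlowK_apply_of_periodic hK hτ (periodic_phaseFlow hU _) hk

theorem stmt19_general (p : ℤ) (q : ℕ) (hq : 1 ≤ q) (κ : ℕ) (hκe : Even κ) (hκ2 : 2 ≤ κ)
    (K : ℕ) (hK : K = κ * q) (σ : ℝ) (τ : ℝ)
    (hτ : τ = 2 * Real.pi * (p : ℝ) / (q : ℝ) ∨ τ = 2 * Real.pi * (p : ℝ) / ((q : ℝ) ^ 2))
    (U0 : ℤ → ℂ)
    (hU0q : ∀ j ∈ BK K, ¬ ((q : ℤ) ∣ j) → dft K U0 j = 0)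
    (Un : ℕ → ℤ → ℂ) (h0 : Un 0 = U0)
    (hrec : ∀ n : ℕ, Un (n + 1) =
      freeFlowK K τ (fun k => Complex.exp (-(Complex.I * (σ : ℂ) * (τ : ℂ)) *
        ((‖Un n k‖ : ℂ)) ^ 2) * Un n k)) :
    ∀ n : ℕ, ∀ k ∈ BK K,
      Un n k =
        Complex.exp (-(Complex.I * (σ : ℂ) * (n : ℂ) * (τ : ℂ)) *
          ((‖U0 k‖ : ℂ)) ^ 2) * U0 k := by
  subst hK
  have : NeZero (κ * q) := ⟨Nat.mul_ne_zero (by omega) (by omega)⟩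
  have hK : Even (κ * q) := hκe.mul_right q
  -- the trigonometric interpolant of `U0` agrees with it on `B^K` and is `κ`-periodic
  set U := idft (κ * q) (dft (κ * q) U0)
  have hU_eq : ∀ k ∈ BK (κ * q), U k = U0 k := fun k hk => idft_dft_of_mem hK U0 hk
  have hU_per : Periodic U κ := idft_periodic_of_dvd hU0q
  have hrec' : ∀ n, Un (n + 1) = freeFlowK (κ * q) τ (phaseFlow (σ * τ) (Un n)) := by
    intro n
    rw [hrec n]
    congr
    funext l
    simp only [phaseFlow, ofReal_mul, mul_assoc]
  have hUn := splitting_eq_phaseFlow hK hτ hU_per (fun k hk => by rw [h0, hU_eq k hk]) hrec'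
  intro n k hk
  rw [hUn n k hk, phaseFlow, hU_eq k hk]
  congr 2
  push_cast
  ring

/-- For `K = κq` (`κ ≥ 2` even), `σ = ±1`, and the resonant time step
`τ = 2πp/q` or `τ = 2πp/q²`, if `U⁰ ∈ W_{κ,q}` then the splitting iterates
`U^{n+1} = e^{iτΔ^K}((e^{−iστ|U^n_k|²}U^n_k)_k)` satisfy
`U^n_k = e^{−iσnτ|U⁰_k|²}U⁰_k` for every `n ≥ 0` and every `k ∈ B^K`. -/
theorem stmt19 (p : ℤ) (q : ℕ) (hq : 1 ≤ q) (κ : ℕ) (hκe : Even κ) (hκ2 : 2 ≤ κ)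
    (K : ℕ) (hK : K = κ * q) (σ : ℝ) (hσ : σ = 1 ∨ σ = -1) (τ : ℝ)
    (hτ : τ = 2 * Real.pi * (p : ℝ) / (q : ℝ) ∨ τ = 2 * Real.pi * (p : ℝ) / ((q : ℝ) ^ 2))
    (U0 : ℤ → ℂ) (hU0_per : ∀ j : ℤ, U0 (j + K) = U0 j)
    (hU0q : ∀ j ∈ BK K, ¬ ((q : ℤ) ∣ j) → dft K U0 j = 0)
    (Un : ℕ → ℤ → ℂ) (h0 : Un 0 = U0)
    (hrec : ∀ n : ℕ, Un (n + 1) =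
      freeFlowK K τ (fun k => Complex.exp (-(Complex.I * (σ : ℂ) * (τ : ℂ)) *
        ((‖Un n k‖ : ℂ)) ^ 2) * Un n k)) :
    ∀ n : ℕ, ∀ k ∈ BK K,
      Un n k =
        Complex.exp (-(Complex.I * (σ : ℂ) * (n : ℂ) * (τ : ℂ)) *
          ((‖U0 k‖ : ℂ)) ^ 2) * U0 k :=
  stmt19_general p q hq κ hκe hκ2 K hK σ τ hτ U0 hU0q Un h0 hrec
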